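/- arXiv:1809.05730 — 2 statements merged into one kernel-verified Lean document; each statement's English description precedes it below -/
import Mathlib

section
/- A finite simple graph G is a union of paths (i.e., G is acyclic and every vertex has degree at most 2) if and only if G admits an invisible order, i.e., an enumeration v_0, v_1, ..., v_{p-1} of all its vertices such that for all indices i < j, if v_i and v_j are adjacent then j = i + 1. -/
/-- A simple graph is a *union of paths* if it is acyclic and every vertex
has degree at most 2. -/
def IsUnionOfPaths {V : Type*} (G : SimpleGraph V) : Prop :=
  G.IsAcyclic ∧ ∀ v : V, (G.neighborSet v).ncard ≤ 2

/-!
An invisible order `e` is the same as a bijection along which `G` is a subgraph of the path graph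
`pathGraph p`, the Hasse diagram of `Fin p`. Hasse diagrams of linear orders are unions of paths
(every walk crossing a covering pair `i ⋖ j` uses the edge `s(i, j)`), and being a union of paths
passes to subgraphs, which gives one direction.

Conversely, a nonempty finite forest has a vertex `w` of degree at most one: the end of a longest
path. Deleting `w` leaves a union of paths in which the neighbour of `w`, if there is one, again
has degree at most one. By induction the remaining vertices have an invisible order starting at
that vertex, and putting `w` in front of it gives an invisible order of `G`.
-/

open SimpleGraph

namespace SimpleGraph

section hasse

variable {α : Type*} [LinearOrder α]

lemma hasse_walk_mem_edges_of_covBy {i j : α} (hij : i ⋖ j) :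
    ∀ {u v : α} (p : (hasse α).Walk u v), u ≤ i → j ≤ v → s(i, j) ∈ p.edges
  | _, _, .nil, hu, hv => absurd (hu.trans_lt (hij.lt.trans_le hv)) (lt_irrefl _)
  | u, _, .cons (v := u') hadj p, hu, hv => by
    rw [Walk.edges_cons, List.mem_cons]
    by_cases hu' : u' ≤ i
    · exact .inr (hasse_walk_mem_edges_of_covBy hij p hu' hv)
    · push Not at hu'
      rcases hasse_adj.1 hadj with h | h
      · obtain rfl : u = i := le_antisymm hu (not_lt.1 fun hlt => h.2 hlt hu')
        exact .inl (by rw [h.unique_right hij])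
      · exact absurd (h.lt.trans_le hu) (not_lt.2 hu'.le)

lemma isAcyclic_hasse : (hasse α).IsAcyclic := by
  refine isAcyclic_iff_forall_adj_isBridge.2 fun u v huv => ?_
  rcases hasse_adj.1 huv with h | h
  on_goal 2 => rw [Sym2.eq_swap]
  all_goals exact isBridge_iff_forall_walk_mem_edges.2 fun p =>
    hasse_walk_mem_edges_of_covBy h p le_rfl le_rfl

lemma ncard_neighborSet_hasse_le_two (a : α) : ((hasse α).neighborSet a).ncard ≤ 2 := by
  have hup : {b | a ⋖ b}.Subsingleton := fun _ hb _ hc => hb.unique_right hc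
  have hdown : {b | b ⋖ a}.Subsingleton := fun _ hb _ hc => hb.unique_left hc
  have hsplit : (hasse α).neighborSet a = {b | a ⋖ b} ∪ {b | b ⋖ a} := by
    ext; simp [hasse_adj]
  calc ((hasse α).neighborSet a).ncard ≤ {b | a ⋖ b}.ncard + {b | b ⋖ a}.ncard :=
        hsplit ▸ Set.ncard_union_le _ _
    _ ≤ 1 + 1 := add_le_add ((Set.ncard_le_one hup.finite).2 hup)
        ((Set.ncard_le_one hdown.finite).2 hdown)

end hasse

lemma IsAcyclic.exists_neighborSet_subsingleton {V : Type*} [Finite V] [Nonempty V]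
    {G : SimpleGraph V} (hG : G.IsAcyclic) : ∃ v, (G.neighborSet v).Subsingleton := by
  obtain ⟨u, v, p, hp, hmax⟩ := Walk.exists_isPath_forall_isPath_length_le_length G
  have hpen : ∀ w, G.Adj v w → w = p.penultimate := fun w hw =>
    hG.eq_penultimate_of_adj_end hp hw <| by
      by_contra hnot
      simpa using hmax _ _ _ (hp.concat hnot hw)
  exact ⟨v, fun x hx y hy => (hpen x hx).trans (hpen y hy).symm⟩

end SimpleGraph

section

variable {V W : Type*}

lemma IsUnionOfPaths.anti [Finite V] {G H : SimpleGraph V} (hle : G ≤ H)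
    (hH : IsUnionOfPaths H) : IsUnionOfPaths G :=
  ⟨hH.1.anti hle, fun v => (Set.ncard_le_ncard (neighborSet_mono hle v)).trans (hH.2 v)⟩

lemma IsUnionOfPaths.comap [Finite W] {H : SimpleGraph W} (hH : IsUnionOfPaths H) {f : V → W}
    (hf : Function.Injective f) : IsUnionOfPaths (H.comap f) :=
  ⟨hH.1.comap (Hom.comap f H) hf, fun v =>
    (Set.ncard_le_ncard_of_injOn f (fun _ h => h) hf.injOn).trans (hH.2 (f v))⟩

lemma isUnionOfPaths_hasse (α : Type*) [LinearOrder α] : IsUnionOfPaths (hasse α) :=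
  ⟨isAcyclic_hasse, ncard_neighborSet_hasse_le_two⟩

def IsInvisibleOrder {p : ℕ} (G : SimpleGraph V) (e : Fin p ≃ V) : Prop :=
  ∀ i j : Fin p, i < j → G.Adj (e i) (e j) → (j : ℕ) = i + 1

lemma isInvisibleOrder_iff_le_comap {p : ℕ} {G : SimpleGraph V} {e : Fin p ≃ V} :
    IsInvisibleOrder G e ↔ G ≤ (pathGraph p).comap e.symm := by
  constructor
  · intro h x y hxy
    rw [comap_adj, pathGraph_adj]
    rcases lt_trichotomy (e.symm x) (e.symm y) with hlt | heq | hgt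
    · exact .inl (h _ _ hlt (by simpa using hxy)).symm
    · exact absurd (e.symm.injective heq) hxy.ne
    · exact .inr (h _ _ hgt (by simpa using hxy.symm)).symm
  · intro h i j hij hadj
    have := pathGraph_adj.1 (by simpa using h hadj)
    rw [Fin.lt_def] at hij
    omega

lemma IsUnionOfPaths.exists_leaf_of_delete_leaf [Finite V] {G : SimpleGraph V}
    (hG : IsUnionOfPaths G) {w : V} (hw : (G.neighborSet w).Subsingleton)
    [Nonempty {v // v ≠ w}] :
    ∃ w' : {v // v ≠ w}, ((G.comap Subtype.val).neighborSet w').Subsingleton ∧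
      ∀ x, G.Adj w x → x = w' := by
  by_cases hnbr : ∃ u, G.Adj w u
  · obtain ⟨u, hu⟩ := hnbr
    refine ⟨⟨u, hu.ne'⟩, fun x hx y hy => Subtype.ext ?_, fun x hx => hw hx hu⟩
    have hrest : (G.neighborSet u \ {w}).ncard ≤ 1 := by
      have := Set.ncard_sdiff_singleton_add_one (show w ∈ G.neighborSet u from hu.symm)
      have := hG.2 u
      omega
    exact (Set.ncard_le_one_iff_subsingleton.1 hrest) ⟨hx, x.2⟩ ⟨hy, y.2⟩
  · push Not at hnbr
    obtain ⟨w', hw'⟩ :=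
      (hG.comap (Subtype.val_injective (p := (· ≠ w)))).1.exists_neighborSet_subsingleton
    exact ⟨w', hw', fun x hx => absurd hx (hnbr x)⟩

lemma IsInvisibleOrder.finSuccEquiv_trans [DecidableEq V] {n : ℕ} {G : SimpleGraph V} {w : V}
    {e : Fin (n + 1) ≃ {v // v ≠ w}} (he : IsInvisibleOrder (G.comap Subtype.val) e)
    (hstart : ∀ x, G.Adj w x → x = e 0) :
    IsInvisibleOrder G
      ((finSuccEquiv (n + 1)).trans (e.optionCongr.trans (Equiv.optionSubtypeNe w))) := by
  set f := (finSuccEquiv (n + 1)).trans (e.optionCongr.trans (Equiv.optionSubtypeNe w))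
  have hf_symm_self : f.symm w = 0 := by simp [f, ← Equiv.optionCongr_symm]
  have hf_symm : ∀ x (hx : x ≠ w), f.symm x = (e.symm ⟨x, hx⟩).succ := fun x hx => by
    simp [f, ← Equiv.optionCongr_symm, Equiv.optionSubtypeNe_symm_of_ne hx]
  have hfirst : ∀ y, G.Adj w y → (pathGraph (n + 2)).Adj (f.symm w) (f.symm y) := by
    intro y hy
    have : e.symm ⟨y, hy.ne'⟩ = 0 := by
      rw [Equiv.symm_apply_eq]; exact Subtype.ext (hstart y hy)
    simp [hf_symm_self, hf_symm y hy.ne', this, pathGraph_adj]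
  refine isInvisibleOrder_iff_le_comap.2 fun x y hxy => ?_
  rw [comap_adj]
  by_cases hx : x = w
  · subst hx; exact hfirst y hxy
  by_cases hy : y = w
  · subst hy; exact (hfirst x hxy.symm).symm
  have := isInvisibleOrder_iff_le_comap.1 he
    (show (G.comap Subtype.val).Adj ⟨x, hx⟩ ⟨y, hy⟩ from hxy)
  rw [comap_adj, pathGraph_adj] at this
  rw [hf_symm x hx, hf_symm y hy, pathGraph_adj]
  simpa using this

lemma IsUnionOfPaths.exists_isInvisibleOrder_apply_zero (n : ℕ) [Fintype V]
    {G : SimpleGraph V} (hG : IsUnionOfPaths G) (hcard : Fintype.card V = n + 1) {w : V}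
    (hw : (G.neighborSet w).Subsingleton) :
    ∃ e : Fin (n + 1) ≃ V, e 0 = w ∧ IsInvisibleOrder G e := by
  induction n generalizing V with
  | zero =>
    have : Subsingleton V := Fintype.card_le_one_iff_subsingleton.1 hcard.le
    exact ⟨(Fintype.equivFinOfCardEq hcard).symm, Subsingleton.elim _ _,
      fun i j hij => by omega⟩
  | succ m ih =>
    classical
    have hcard' : Fintype.card {v // v ≠ w} = m + 1 := by
      rw [Fintype.card_subtype_compl, Fintype.card_subtype_eq, hcard]; rfl
    have : Nonempty {v // v ≠ w} := Fintype.card_pos_iff.1 (by omega)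
    obtain ⟨w', hw', hstart⟩ := hG.exists_leaf_of_delete_leaf hw
    obtain ⟨e, rfl, he⟩ := ih (hG.comap Subtype.val_injective) hcard' hw'
    exact ⟨_, by simp, he.finSuccEquiv_trans hstart⟩

end

/-- A finite simple graph is a union of paths iff it admits an *invisible order*:
an enumeration of all its vertices such that adjacent vertices with indices
`i < j` satisfy `j = i + 1`. -/
theorem unionOfPaths_iff_invisibleOrder {V : Type*} [Fintype V]
    (G : SimpleGraph V) (p : ℕ) (hp : Fintype.card V = p) :
    IsUnionOfPaths G ↔
      ∃ e : Fin p ≃ V, ∀ i j : Fin p, i < j → G.Adj (e i) (e j) →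
        (j : ℕ) = (i : ℕ) + 1 := by
  show IsUnionOfPaths G ↔ ∃ e : Fin p ≃ V, IsInvisibleOrder G e
  constructor
  · intro hG
    cases p with
    | zero => exact ⟨(Fintype.equivFinOfCardEq hp).symm, fun i => i.elim0⟩
    | succ n =>
      have : Nonempty V := Fintype.card_pos_iff.1 (by omega)
      obtain ⟨w, hw⟩ := hG.1.exists_neighborSet_subsingleton
      obtain ⟨e, -, he⟩ := hG.exists_isInvisibleOrder_apply_zero n hp hw
      exact ⟨e, he⟩
  · rintro ⟨e, he⟩
    exact ((isUnionOfPaths_hasse (Fin p)).comap e.symm.injective).anti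
      (isInvisibleOrder_iff_le_comap.1 he)
end

section
/- A subset W of the vertices of a finite simple graph G is a visible set of G (i.e., the induced subgraph on the complement of W is a union of paths) if and only if there exists an enumeration e : Fin n ≃ V of the vertices such that vis(e) ⊆ W. -/
open SimpleGraph

section WalkSeq

variable {α : Type*} {H : SimpleGraph α} {x : ℕ → α}

/-- Walk along a sequence of pairwise-adjacent vertices. -/
def walkSeq (hadj : ∀ k, H.Adj (x k) (x (k+1))) : ∀ (a k : ℕ), H.Walk (x a) (x (a + k))
  | _, 0 => SimpleGraph.Walk.nil
  | a, k+1 => (walkSeq hadj a k).concat (hadj (a+k))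

lemma walkSeq_support (hadj : ∀ k, H.Adj (x k) (x (k+1))) (a k : ℕ) :
    (walkSeq hadj a k).support = (List.range (k+1)).map (fun t => x (a + t)) := by
  induction k with
  | zero => simp [walkSeq, List.range_succ]
  | succ k ih =>
      rw [walkSeq, SimpleGraph.Walk.support_concat, ih, List.range_succ (n := k+1),
        List.map_append]
      simp

lemma walkSeq_edges (hadj : ∀ k, H.Adj (x k) (x (k+1))) (a k : ℕ) :
    (walkSeq hadj a k).edges = (List.range k).map (fun t => s(x (a + t), x (a + t + 1))) := by
  induction k with
  | zero => simp [walkSeq]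
  | succ k ih =>
      rw [walkSeq, SimpleGraph.Walk.edges_concat, ih, List.range_succ, List.map_append]
      simp only [List.map_cons, List.map_nil, List.concat_eq_append]
      congr 2

lemma walkSeq_length (hadj : ∀ k, H.Adj (x k) (x (k+1))) (a k : ℕ) :
    (walkSeq hadj a k).length = k := by
  induction k with
  | zero => simp [walkSeq]
  | succ k ih => rw [walkSeq, SimpleGraph.Walk.length_concat, ih]

/-- A finite graph containing an infinite non-backtracking walk has a cycle. -/
lemma not_acyclic_of_seq [Finite α] (hadj : ∀ k, H.Adj (x k) (x (k+1)))
    (hnb : ∀ k, x (k+2) ≠ x k) : ¬ H.IsAcyclic := by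
  intro hac
  obtain ⟨a, b, hab, hxab⟩ : ∃ a b, a ≠ b ∧ x a = x b := by
    obtain ⟨a, b, h1, h2⟩ := Finite.exists_ne_map_eq_of_infinite x
    exact ⟨a, b, h1, h2⟩
  classical
  -- arrange a < b
  have hP : ∃ j, ∃ i, i < j ∧ x i = x j := by
    rcases lt_or_gt_of_ne hab with h | h
    · exact ⟨b, a, h, hxab⟩
    · exact ⟨a, b, h, hxab.symm⟩
  let j0 := Nat.find hP
  obtain ⟨i0, hij, hx⟩ : ∃ i, i < j0 ∧ x i = x j0 := Nat.find_spec hP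
  have hdist : ∀ p q, p < q → q < j0 → x p ≠ x q := by
    intro p q hpq hq hEq
    exact Nat.find_min hP hq ⟨p, hpq, hEq⟩
  -- distinctness helper
  have D : ∀ p q, i0 ≤ p → p < q → q ≤ j0 → ¬(p = i0 ∧ q = j0) → x p ≠ x q := by
    intro p q hp hpq hq hne hEq
    rcases eq_or_lt_of_le hq with rfl | hq'
    · rcases eq_or_lt_of_le hp with rfl | hp'
      · exact hne ⟨rfl, rfl⟩
      · exact hdist i0 p hp' hpq (hx.trans hEq.symm)
    · exact hdist p q hpq hq' hEq
  set k0 := j0 - i0 with hk0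
  have hk1 : 1 ≤ k0 := by omega
  have hk3 : 3 ≤ k0 := by
    by_contra hcon
    push_neg at hcon
    interval_cases k0
    · exact (hadj i0).ne (by rw [show i0 + 1 = j0 by omega]; exact hx)
    · exact hnb i0 (by rw [show i0 + 2 = j0 by omega]; exact hx.symm)
  have hij0 : i0 + k0 = j0 := by omega
  -- the cycle
  let c : H.Walk (x i0) (x i0) :=
    (walkSeq hadj i0 k0).copy rfl (by rw [hij0, ← hx])
  have hsupp : c.support = (List.range (k0+1)).map (fun t => x (i0 + t)) := by
    simp [c, walkSeq_support]
  have hedges : c.edges = (List.range k0).map (fun t => s(x (i0 + t), x (i0 + t + 1))) := by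
    simp [c, walkSeq_edges]
  have hlen : c.length = k0 := by simp [c, walkSeq_length]
  -- edge injectivity helper (for t < u)
  have edge_ne : ∀ t u, t < u → u < k0 →
      s(x (i0 + t), x (i0 + t + 1)) ≠ s(x (i0 + u), x (i0 + u + 1)) := by
    intro t u htu hu hEq
    rw [Sym2.eq_iff] at hEq
    rcases hEq with ⟨h1, h2⟩ | ⟨h1, h2⟩
    · exact D (i0+t) (i0+u) (by omega) (by omega) (by omega) (by omega) h1
    · -- x (i0+t) = x (i0+u+1) and x (i0+t+1) = x (i0+u)
      have h3 : t = 0 ∧ u + 1 = k0 := by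
        by_contra hcon
        exact D (i0+t) (i0+u+1) (by omega) (by omega) (by omega) (by omega) h1
      obtain ⟨rfl, hu1⟩ := h3
      exact D (i0+1) (i0+u) (by omega) (by omega) (by omega) (by omega) h2
  have hcyc : c.IsCycle := by
    constructor
    · constructor
      · constructor
        rw [hedges]
        refine List.Nodup.map_on ?_ List.nodup_range
        intro t ht u hu hEq
        rw [List.mem_range] at ht hu
        rcases lt_trichotomy t u with h | h | h
        · exact absurd hEq (edge_ne t u h hu)
        · exact h
        · exact absurd hEq.symm (edge_ne u t h ht)
      · intro hnil
        have : c.length = 0 := by rw [hnil]; rfl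
        omega
    · rw [hsupp, List.range_succ_eq_map]
      simp only [List.map_cons, List.tail_cons, List.map_map]
      refine List.Nodup.map_on ?_ List.nodup_range
      intro t ht u hu hEq
      rw [List.mem_range] at ht hu
      simp only [Function.comp] at hEq
      rcases lt_trichotomy t u with h | h | h
      · exact absurd hEq (D (i0+(t+1)) (i0+(u+1)) (by omega) (by omega) (by omega) (by omega))
      · exact h
      · exact absurd hEq.symm (D (i0+(u+1)) (i0+(t+1)) (by omega) (by omega) (by omega) (by omega))
  exact hac c hcyc

end WalkSeq

section NoLeaf

variable {α : Type*} [Fintype α] [DecidableEq α] {H : SimpleGraph α} [DecidableRel H.Adj]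

/-- If every vertex of a nonempty finset has at least two neighbours inside it,
the graph is not acyclic. -/
lemma not_acyclic_of_min_degree_two (s : Finset α) (hne : s.Nonempty)
    (hdeg : ∀ v ∈ s, 2 ≤ (s.filter (H.Adj v)).card) : ¬ H.IsAcyclic := by
  classical
  obtain ⟨v0, hv0⟩ := hne
  have ex : ∀ (a b : α), b ∈ s → ∃ c, (c ∈ s ∧ H.Adj b c) ∧ c ≠ a := by
    intro a b hb
    obtain ⟨c, hc, hca⟩ := Finset.exists_mem_ne
      (s := s.filter (H.Adj b)) (by have := hdeg b hb; omega) a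
    rw [Finset.mem_filter] at hc
    exact ⟨c, ⟨hc.1, hc.2⟩, hca⟩
  -- initial pair
  obtain ⟨c1, hc1, _⟩ := ex v0 v0 hv0
  let T := {p : α × α // p.2 ∈ s ∧ H.Adj p.1 p.2}
  let nxt : T → T := fun q =>
    ⟨(q.1.2, (ex q.1.1 q.1.2 q.2.1).choose),
      (ex q.1.1 q.1.2 q.2.1).choose_spec.1.1, (ex q.1.1 q.1.2 q.2.1).choose_spec.1.2⟩
  let X : ℕ → T := fun k => nxt^[k] ⟨(v0, c1), hc1.1, hc1.2⟩
  have hX : ∀ k, X (k+1) = nxt (X k) := by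
    intro k
    simp only [X, Function.iterate_succ_apply']
  have hfst : ∀ k, (X (k+1)).1.1 = (X k).1.2 := by intro k; rw [hX k]
  let x : ℕ → α := fun k => (X k).1.1
  have hadj : ∀ k, H.Adj (x k) (x (k+1)) := by
    intro k
    show H.Adj (X k).1.1 (X (k+1)).1.1
    rw [hfst k]
    exact (X k).2.2
  have hnb : ∀ k, x (k+2) ≠ x k := by
    intro k
    show (X (k+2)).1.1 ≠ (X k).1.1
    rw [hfst (k+1), hX k]
    exact (ex (X k).1.1 (X k).1.2 (X k).2.1).choose_spec.2
  exact not_acyclic_of_seq hadj hnb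

end NoLeaf

section Consecutive

variable {α : Type*} {H : SimpleGraph α}

/-- Adjacent vertices of `L` sit at consecutive indices. -/
def Consec (H : SimpleGraph α) (L : List α) : Prop :=
  ∀ i j (hi : i < L.length) (hj : j < L.length), H.Adj L[i] L[j] → i + 1 = j ∨ j + 1 = i

/-- A graph whose adjacency relation forces consecutive values of an injective
`ℕ`-valued function is acyclic. -/
lemma acyclic_of_consecutive (f : α → ℕ) (hf : Function.Injective f)
    (h : ∀ a b, H.Adj a b → f a = f b + 1 ∨ f b = f a + 1) : H.IsAcyclic := by
  classical
  intro v c hc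
  obtain ⟨m, hm, hmax⟩ := Finset.exists_max_image c.support.toFinset f
    ⟨v, by simp [SimpleGraph.Walk.start_mem_support]⟩
  rw [List.mem_toFinset] at hm
  have hmax' : ∀ z ∈ c.support, f z ≤ f m := fun z hz => hmax z (List.mem_toFinset.mpr hz)
  set c' := c.rotate m hm with hc'def
  have hc' : c'.IsCycle := hc.rotate hm
  have hmemc' : ∀ z ∈ c'.support, f z ≤ f m := by
    intro z hz
    rw [SimpleGraph.Walk.support_eq_cons] at hz
    rcases List.mem_cons.mp hz with rfl | hz'
    · exact le_rfl
    · exact hmax' z (List.mem_of_mem_tail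
        (((SimpleGraph.Walk.support_rotate c m hm).mem_iff).mp hz'))
  have hnn : ¬ c'.Nil := hc'.not_nil
  obtain ⟨b, hb, p, hpeq⟩ := SimpleGraph.Walk.not_nil_iff.mp hnn
  rw [hpeq] at hc'
  have hcyc2 := (SimpleGraph.Walk.cons_isCycle_iff p hb).mp hc'
  have hplen : 2 ≤ p.length := by
    have h3 := hc'.three_le_length
    rw [SimpleGraph.Walk.length_cons] at h3
    omega
  have hprnn : ¬ p.reverse.Nil := by
    rw [SimpleGraph.Walk.nil_iff_length_eq, SimpleGraph.Walk.length_reverse]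
    omega
  obtain ⟨a, ha, q, hqeq⟩ := SimpleGraph.Walk.not_nil_iff.mp hprnn
  have hma : s(m, a) ∈ p.edges := by
    have h1 : s(m, a) ∈ p.reverse.edges := by
      rw [hqeq, SimpleGraph.Walk.edges_cons]
      exact List.mem_cons_self
    rwa [SimpleGraph.Walk.edges_reverse, List.mem_reverse] at h1
  have hab : a ≠ b := by rintro rfl; exact hcyc2.2 hma
  have hbmem : b ∈ c'.support := by
    rw [hpeq, SimpleGraph.Walk.support_cons]
    exact List.mem_cons_of_mem _ p.start_mem_support
  have hamem : a ∈ c'.support := by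
    have h1 : a ∈ p.reverse.support := by
      rw [hqeq, SimpleGraph.Walk.support_cons]
      exact List.mem_cons_of_mem _ q.start_mem_support
    rw [SimpleGraph.Walk.support_reverse, List.mem_reverse] at h1
    rw [hpeq, SimpleGraph.Walk.support_cons]
    exact List.mem_cons_of_mem _ h1
  have hfa : f a ≤ f m := hmemc' a hamem
  have hfb : f b ≤ f m := hmemc' b hbmem
  have h1 := h m a ha
  have h2 := h m b hb
  exact hab (hf (by omega : f a = f b))

end Consecutive

section ListConstruction

variable {α : Type*}

lemma consec_cons {H : SimpleGraph α} {u : α} {L : List α} (hnd : L.Nodup) (hL : Consec H L)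
    (hu : ∀ j (hj : j < L.length), H.Adj u L[j] → j = 0) : Consec H (u :: L) := by
  intro i j hi hj hadj
  match i, j with
  | 0, 0 => exact absurd hadj (H.irrefl)
  | 0, j+1 =>
      left
      simp only [List.getElem_cons_zero, List.getElem_cons_succ] at hadj
      have := hu j (by simpa using hj) hadj
      omega
  | i+1, 0 =>
      right
      simp only [List.getElem_cons_zero, List.getElem_cons_succ] at hadj
      have := hu i (by simpa using hi) hadj.symm
      omega
  | i+1, j+1 =>
      simp only [List.getElem_cons_succ] at hadj
      rcases hL i j (by simpa using hi) (by simpa using hj) hadj with h | h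
      · left; omega
      · right; omega

lemma exists_anchored [Fintype α] [DecidableEq α] (H : SimpleGraph α) [DecidableRel H.Adj]
    (hac : H.IsAcyclic) :
    ∀ (m : ℕ) (s : Finset α), s.card = m →
    (∀ v ∈ s, (s.filter (H.Adj v)).card ≤ 2) →
    ∀ u ∈ s, (s.filter (H.Adj u)).card ≤ 1 →
    ∃ L : List α, L.Nodup ∧ (∀ x, x ∈ L ↔ x ∈ s) ∧ (∃ T, L = u :: T) ∧ Consec H L := by
  intro m
  induction m with
  | zero =>
      intro s hs _ u hu _
      rw [Finset.card_eq_zero] at hs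
      subst hs
      simp at hu
  | succ k ih =>
      intro s hs hdeg u hu hleaf
      set s' := s.erase u with hs'def
      have hs' : s'.card = k := by
        rw [hs'def, Finset.card_erase_of_mem hu, hs]
        omega
      have hdeg' : ∀ v ∈ s', (s'.filter (H.Adj v)).card ≤ 2 := by
        intro v hv
        refine le_trans (Finset.card_le_card ?_) (hdeg v (Finset.mem_of_mem_erase hv))
        intro y hy
        rw [Finset.mem_filter] at hy ⊢
        exact ⟨Finset.mem_of_mem_erase hy.1, hy.2⟩
      interval_cases hc : (s.filter (H.Adj u)).card
      · -- u has no neighbours in s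
        have hnone : ∀ y ∈ s, ¬H.Adj u y := by
          intro y hy hAdj
          have hy' : y ∈ s.filter (H.Adj u) := Finset.mem_filter.mpr ⟨hy, hAdj⟩
          rw [Finset.card_eq_zero] at hc
          simp [hc] at hy'
        rcases Finset.eq_empty_or_nonempty s' with he | hne
        · have hsu : s = {u} := by
            rcases (Finset.erase_eq_empty_iff s u).mp he with h | h
            · exact absurd hu (h ▸ Finset.notMem_empty u)
            · exact h
          refine ⟨[u], by simp, ?_, ⟨[], rfl⟩, ?_⟩
          · intro x; simp [hsu]
          · intro i j hi hj hadj
            simp only [List.length_singleton] at hi hj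
            interval_cases i
            interval_cases j
            exact absurd hadj (H.irrefl)
        · have hleaf' : ∃ u' ∈ s', (s'.filter (H.Adj u')).card ≤ 1 := by
            by_contra hcon
            push_neg at hcon
            exact not_acyclic_of_min_degree_two s' hne (fun v hv => hcon v hv) hac
          obtain ⟨u', hu', hl'⟩ := hleaf'
          obtain ⟨L, hnd, hmem, _, hcons⟩ := ih s' hs' hdeg' u' hu' hl'
          have huL : u ∉ L := by
            rw [hmem]
            simp [hs'def]
          refine ⟨u :: L, List.nodup_cons.mpr ⟨huL, hnd⟩, ?_, ⟨L, rfl⟩, ?_⟩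
          · intro x
            simp only [List.mem_cons, hmem, hs'def, Finset.mem_erase]
            constructor
            · rintro (rfl | ⟨_, h⟩) <;> [exact hu; exact h]
            · intro hx
              rcases eq_or_ne x u with rfl | hne'
              · exact Or.inl rfl
              · exact Or.inr ⟨hne', hx⟩
          · refine consec_cons hnd hcons ?_
            intro j hj hadj
            exact absurd hadj (hnone _ (Finset.mem_of_mem_erase ((hmem _).mp (L.getElem_mem hj))))
      · -- u has exactly one neighbour w in s
        obtain ⟨w, hw⟩ := Finset.card_eq_one.mp hc
        have hwmem : w ∈ s ∧ H.Adj u w := by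
          have : w ∈ s.filter (H.Adj u) := by rw [hw]; exact Finset.mem_singleton_self w
          exact Finset.mem_filter.mp this
        have hws' : w ∈ s' := Finset.mem_erase.mpr ⟨hwmem.2.ne', hwmem.1⟩
        have hlw : (s'.filter (H.Adj w)).card ≤ 1 := by
          have hsub : s'.filter (H.Adj w) = (s.filter (H.Adj w)).erase u := by
            ext y
            simp only [hs'def, Finset.mem_filter, Finset.mem_erase]
            tauto
          rw [hsub, Finset.card_erase_of_mem
            (Finset.mem_filter.mpr ⟨hu, hwmem.2.symm⟩)]
          have := hdeg w hwmem.1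
          omega
        obtain ⟨L, hnd, hmem, hanchor, hcons⟩ := ih s' hs' hdeg' w hws' hlw
        have huL : u ∉ L := by rw [hmem]; simp [hs'def]
        refine ⟨u :: L, List.nodup_cons.mpr ⟨huL, hnd⟩, ?_, ⟨L, rfl⟩, ?_⟩
        · intro x
          simp only [List.mem_cons, hmem, hs'def, Finset.mem_erase]
          constructor
          · rintro (rfl | ⟨_, h⟩) <;> [exact hu; exact h]
          · intro hx
            rcases eq_or_ne x u with rfl | hne'
            · exact Or.inl rfl
            · exact Or.inr ⟨hne', hx⟩
        · refine consec_cons hnd hcons ?_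
          intro j hj hadj
          have hLj : L[j] ∈ s.filter (H.Adj u) :=
            Finset.mem_filter.mpr
              ⟨Finset.mem_of_mem_erase ((hmem _).mp (L.getElem_mem hj)), hadj⟩
          rw [hw, Finset.mem_singleton] at hLj
          obtain ⟨T, rfl⟩ := hanchor
          have h0 : (w :: T)[0]'(by simp) = w := rfl
          have : (w :: T)[j] = (w :: T)[0]'(by simp) := by rw [h0, hLj]
          exact hnd.getElem_inj_iff.mp this

lemma exists_consec_list [Fintype α] [DecidableEq α] (H : SimpleGraph α) [DecidableRel H.Adj]
    (hac : H.IsAcyclic) (s : Finset α)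
    (hdeg : ∀ v ∈ s, (s.filter (H.Adj v)).card ≤ 2) :
    ∃ L : List α, L.Nodup ∧ (∀ x, x ∈ L ↔ x ∈ s) ∧ Consec H L := by
  rcases Finset.eq_empty_or_nonempty s with rfl | hne
  · exact ⟨[], by simp, by simp, fun i j hi hj _ => by simp at hi⟩
  · have hleaf : ∃ u ∈ s, (s.filter (H.Adj u)).card ≤ 1 := by
      by_contra hcon
      push_neg at hcon
      exact not_acyclic_of_min_degree_two s hne (fun v hv => hcon v hv) hac
    obtain ⟨u, hu, hl⟩ := hleaf
    obtain ⟨L, hnd, hmem, _, hcons⟩ := exists_anchored H hac s.card s rfl hdeg u hu hl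
    exact ⟨L, hnd, hmem, hcons⟩

end ListConstruction

/-- A set `W` of vertices is a visible set (the induced subgraph on its
complement is a union of paths) iff there is an enumeration `e` of the
vertices with `vis(e) ⊆ W`. -/
theorem isVisibleSet_iff_exists_enum {V : Type*} [Fintype V] (G : SimpleGraph V)
    (n : ℕ) (hn : Fintype.card V = n) (W : Set V) :
    IsUnionOfPaths (G.induce Wᶜ) ↔
      ∃ e : Fin n ≃ V,
        {v : V | ∃ i j : Fin n, v = e i ∧ (i : ℕ) + 1 < (j : ℕ) ∧ G.Adj (e i) (e j)} ⊆ W := by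
  classical
  constructor
  · rintro ⟨hac, hdeg⟩
    have hdegF : ∀ v ∈ (Finset.univ : Finset ↥(Wᶜ)),
        (Finset.univ.filter ((G.induce Wᶜ).Adj v)).card ≤ 2 := by
      intro v _
      have hset : (G.induce Wᶜ).neighborSet v
          = ↑(Finset.univ.filter ((G.induce Wᶜ).Adj v)) := by
        ext y; simp [SimpleGraph.mem_neighborSet]
      have h2 := hdeg v
      rwa [hset, Set.ncard_coe_finset] at h2
    obtain ⟨L', hnd', hmem', hcons'⟩ := exists_consec_list (G.induce Wᶜ) hac Finset.univ hdegF
    set A := (Finset.univ.filter (· ∈ W)).toList with hAdef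
    set B := L'.map Subtype.val with hBdef
    set L := A ++ B with hLdef
    have hA : ∀ y, y ∈ A ↔ y ∈ W := by intro y; simp [hAdef]
    have hBmem : ∀ y, y ∈ B ↔ y ∈ Wᶜ := by
      intro y
      simp only [hBdef, List.mem_map]
      constructor
      · rintro ⟨z, _, rfl⟩; exact z.2
      · intro hy; exact ⟨⟨y, hy⟩, (hmem' _).mpr (Finset.mem_univ _), rfl⟩
    have hndL : L.Nodup := by
      refine List.Nodup.append (Finset.nodup_toList _) (hnd'.map Subtype.val_injective) ?_
      intro y hyA hyB
      exact ((hBmem y).mp hyB) ((hA y).mp hyA)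
    have hmemL : ∀ y, y ∈ L := by
      intro y
      rcases Classical.em (y ∈ W) with h | h
      · exact List.mem_append_left _ ((hA y).mpr h)
      · exact List.mem_append_right _ ((hBmem y).mpr h)
    have hlen : L.length = n := by
      rw [← hn, ← Fintype.card_congr (Equiv.refl V)]
      have h1 : L.toFinset = Finset.univ := by ext y; simp [hmemL]
      have h2 := List.toFinset_card_of_nodup hndL
      rw [h1] at h2
      rw [← h2]
      rfl
    let e0 := List.Nodup.getEquivOfForallMemList L hndL hmemL
    refine ⟨(finCongr hlen.symm).trans e0, ?_⟩
    rintro v ⟨i, j, rfl, hij, hadj⟩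
    have hiL : (i : ℕ) < L.length := by rw [hlen]; exact i.2
    have hjL : (j : ℕ) < L.length := by rw [hlen]; exact j.2
    have hei : (finCongr hlen.symm).trans e0 i = L[(i : ℕ)] := rfl
    have hej : (finCongr hlen.symm).trans e0 j = L[(j : ℕ)] := rfl
    by_contra hvW
    rw [hei] at hvW
    rw [hei, hej] at hadj
    -- position/membership correspondence
    have hApart : ∀ k (h : k < L.length), k < A.length → L[k] ∈ W := by
      intro k h hk
      have : L[k] = A[k] := List.getElem_append_left hk
      rw [this]
      exact (hA _).mp (A.getElem_mem hk)
    have hiA : ¬ ((i : ℕ) < A.length) := fun h => hvW (hApart _ hiL h)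
    have hjA : ¬ ((j : ℕ) < A.length) := by omega
    push_neg at hiA hjA
    have hBlen : B.length = L'.length := by simp [hBdef]
    have hLlen : L.length = A.length + L'.length := by
      rw [hLdef, List.length_append, hBlen]
    have hiB' : (i : ℕ) - A.length < L'.length := by
      have h := hiL; rw [hLlen] at h; omega
    have hjB' : (j : ℕ) - A.length < L'.length := by
      have h := hjL; rw [hLlen] at h; omega
    have hiB : L[(i : ℕ)] = B[(i : ℕ) - A.length]'(by rw [hBlen]; exact hiB') :=
      List.getElem_append_right hiA
    have hjB : L[(j : ℕ)] = B[(j : ℕ) - A.length]'(by rw [hBlen]; exact hjB') :=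
      List.getElem_append_right hjA
    have hBi : B[(i : ℕ) - A.length]'(by rw [hBlen]; exact hiB')
        = (L'[(i : ℕ) - A.length]'hiB').val := List.getElem_map _
    have hBj : B[(j : ℕ) - A.length]'(by rw [hBlen]; exact hjB')
        = (L'[(j : ℕ) - A.length]'hjB').val := List.getElem_map _
    have hvi : (L'[(i : ℕ) - A.length]'hiB').val = L[(i : ℕ)] := by
      rw [hiB]; exact hBi.symm
    have hvj : (L'[(j : ℕ) - A.length]'hjB').val = L[(j : ℕ)] := by
      rw [hjB]; exact hBj.symm
    have hadj' : (G.induce Wᶜ).Adj (L'[(i : ℕ) - A.length]'hiB')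
        (L'[(j : ℕ) - A.length]'hjB') := by
      rw [← hvi, ← hvj] at hadj
      exact hadj
    rcases hcons' _ _ hiB' hjB' hadj' with h | h <;> omega
  · rintro ⟨e, he⟩
    have key : ∀ a b : ↥(Wᶜ), (G.induce Wᶜ).Adj a b →
        ((e.symm a.val : Fin n) : ℕ) = ((e.symm b.val : Fin n) : ℕ) + 1 ∨
        ((e.symm b.val : Fin n) : ℕ) = ((e.symm a.val : Fin n) : ℕ) + 1 := by
      intro a b hab
      have hGab : G.Adj a.val b.val := hab
      have h1 : ¬ (((e.symm a.val : Fin n) : ℕ) + 1 < ((e.symm b.val : Fin n) : ℕ)) := by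
        intro hlt
        exact a.2 (he ⟨e.symm a.val, e.symm b.val, by simp, hlt, by
          simpa using hGab⟩)
      have h2 : ¬ (((e.symm b.val : Fin n) : ℕ) + 1 < ((e.symm a.val : Fin n) : ℕ)) := by
        intro hlt
        exact b.2 (he ⟨e.symm b.val, e.symm a.val, by simp, hlt, by
          simpa using hGab.symm⟩)
      have hne : ((e.symm a.val : Fin n) : ℕ) ≠ ((e.symm b.val : Fin n) : ℕ) := by
        intro hEq
        exact hGab.ne (e.symm.injective (Fin.val_injective hEq))
      omega
    have hinj : Function.Injective (fun v : ↥(Wᶜ) => ((e.symm v.val : Fin n) : ℕ)) := by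
      intro a b h
      exact Subtype.ext (e.symm.injective (Fin.val_injective h))
    constructor
    · exact acyclic_of_consecutive _ hinj key
    · intro v
      set f : ↥(Wᶜ) → ℕ := fun v => ((e.symm v.val : Fin n) : ℕ) with hfdef
      have himg : f '' ((G.induce Wᶜ).neighborSet v) ⊆ {f v - 1, f v + 1} := by
        rintro y ⟨u, hu, rfl⟩
        simp only [Set.mem_insert_iff, Set.mem_singleton_iff, hfdef]
        rcases key v u hu with h | h
        · left; omega
        · right; omega
      calc ((G.induce Wᶜ).neighborSet v).ncard
          = (f '' ((G.induce Wᶜ).neighborSet v)).ncard :=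
            (Set.ncard_image_of_injective _ hinj).symm
        _ ≤ ({f v - 1, f v + 1} : Set ℕ).ncard :=
            Set.ncard_le_ncard himg (Set.toFinite _)
        _ ≤ 2 := by
            refine le_trans (Set.ncard_insert_le _ _) ?_
            simp
end
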